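/- arXiv:1609.09725 — 3 statements merged into one kernel-verified Lean document; each statement's English description precedes it below -/
import Mathlib

section
/- For each n with 1 ≤ n ≤ d-1, the estimator α̂_n := ∑_{i=1}^n (-1)^{i-1} ∑_{|I|=i} P(⋂_{j∈I} A_j) + [∑_{i=0}^n (-1)^i binom(E,i)] 1{E ≥ n+1} is an unbiased estimator of P(⋃_i A_i): its expectation equals P(⋃_{i=1}^d A_i). -/
open Finset Classical MeasureTheory

-- alternating sum full range, real version
lemma alt_full (m : ℕ) :
    ∑ i ∈ Finset.range (m + 1), (-1 : ℝ) ^ i * (m.choose i : ℝ)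
      = if m = 0 then 1 else 0 := by
  have h := Int.alternating_sum_range_choose (n := m)
  have h2 := congrArg (fun z : ℤ => (z : ℝ)) h
  push_cast at h2
  simpa using h2

-- split range sum
lemma alt_sum_eq (n m : ℕ) :
    (∑ i ∈ Finset.range (n + 1), (-1 : ℝ) ^ i * (m.choose i : ℝ))
      = 1 - ∑ i ∈ Finset.Icc 1 n, (-1 : ℝ) ^ (i - 1) * (m.choose i : ℝ) := by
  have h : Finset.range (n + 1) = insert 0 (Finset.Icc 1 n) := by
    ext k; simp [Nat.lt_succ_iff]; omega
  rw [h, Finset.sum_insert (by simp)]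
  have h3 : ∑ i ∈ Finset.Icc 1 n, (-1 : ℝ) ^ i * (m.choose i : ℝ)
      = -∑ i ∈ Finset.Icc 1 n, (-1 : ℝ) ^ (i - 1) * (m.choose i : ℝ) := by
    rw [← Finset.sum_neg_distrib]
    refine Finset.sum_congr rfl fun i hi => ?_
    have h1 : 1 ≤ i := (Finset.mem_Icc.mp hi).1
    have hpow : (-1 : ℝ) ^ i = -(-1 : ℝ) ^ (i - 1) := by
      conv_lhs => rw [show i = (i - 1) + 1 by omega]
      rw [pow_succ]; ring
    rw [hpow]; ring
  rw [h3]; simp; ring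

lemma key_pointwise (n m : ℕ) (hn : 1 ≤ n) :
    (∑ i ∈ Finset.Icc 1 n, (-1 : ℝ) ^ (i - 1) * (m.choose i : ℝ))
      + (∑ i ∈ Finset.range (n + 1), (-1 : ℝ) ^ i * (m.choose i : ℝ))
        * (if n + 1 ≤ m then 1 else 0)
      = if 1 ≤ m then 1 else 0 := by
  by_cases hm : n + 1 ≤ m
  · rw [if_pos hm, if_pos (by omega), alt_sum_eq]; ring
  · rw [if_neg hm]
    push_neg at hm
    have hS : (∑ i ∈ Finset.range (n + 1), (-1 : ℝ) ^ i * (m.choose i : ℝ))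
        = if m = 0 then 1 else 0 := by
      rw [← alt_full m]
      refine (Finset.sum_subset ?_ ?_).symm
      · intro k hk; simp at hk ⊢; omega
      · intro k _ hk
        simp only [Finset.mem_range, Nat.lt_succ_iff, not_le] at hk
        rw [Nat.choose_eq_zero_of_lt hk]; simp
    have := alt_sum_eq n m
    rw [hS] at this
    rw [mul_zero, add_zero]
    rcases Nat.eq_zero_or_pos m with h0 | h0
    · subst h0; simp at this ⊢; linarith
    · rw [if_pos (by omega : 1 ≤ m)]; rw [if_neg (by omega : ¬ m = 0)] at this; linarith

lemma count_lemma {α : Type*} [Fintype α] [DecidableEq α] (s : Finset α) (i : ℕ) :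
    (∑ I ∈ Finset.powersetCard i (Finset.univ : Finset α),
        (if I ⊆ s then (1 : ℝ) else 0)) = (s.card.choose i : ℝ) := by
  rw [Finset.sum_boole]
  congr 1
  rw [← Finset.card_powersetCard]
  congr 1
  ext I
  simp [Finset.mem_powersetCard, Finset.mem_filter, and_comm]


/-- Unbiasedness of the estimator `α̂ₙ`: for `1 ≤ n ≤ d - 1`, the deterministic
truncated inclusion–exclusion sum plus the expectation of the random residual
`[∑_{i=0}^n (-1)^i choose(E,i)] 1{E ≥ n+1}` equals `P(⋃ i, A i)`. -/
theorem stmt3 {Ω : Type*} [MeasurableSpace Ω] (P : Measure Ω)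
    [IsProbabilityMeasure P] (d : ℕ) (A : Fin d → Set Ω)
    (hA : ∀ i, MeasurableSet (A i))
    (E : Ω → ℕ)
    (hE : ∀ ω, E ω = (Finset.univ.filter fun i => ω ∈ A i).card)
    (n : ℕ) (hn1 : 1 ≤ n) (hn2 : n ≤ d - 1) :
    (∑ i ∈ Finset.Icc 1 n, (-1 : ℝ) ^ (i - 1) *
        ∑ I ∈ Finset.powersetCard i (Finset.univ : Finset (Fin d)),
          (P (⋂ j ∈ I, A j)).toReal)
      + ∫ ω, (∑ i ∈ Finset.range (n + 1), (-1 : ℝ) ^ i * ((E ω).choose i : ℝ))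
          * (if n + 1 ≤ E ω then 1 else 0) ∂P
      = (P (⋃ i, A i)).toReal := by
  classical
  have hEmeas : Measurable E := by
    have h : E = fun ω => ∑ i : Fin d, if ω ∈ A i then 1 else 0 := by
      funext ω; rw [hE, Finset.card_filter]
    rw [h]
    exact Finset.measurable_sum _ fun i _ =>
      Measurable.ite (hA i) measurable_const measurable_const
  have hEd : ∀ ω, E ω ≤ d := fun ω => by
    rw [hE]; exact (Finset.card_filter_le _ _).trans (by simp)
  have hint : ∀ G : ℕ → ℝ, Integrable (fun ω => G (E ω)) P := by
    intro G
    have hm : Measurable fun ω => G (E ω) := measurable_from_nat.comp hEmeas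
    refine (integrable_const (∑ k ∈ Finset.range (d + 1), ‖G k‖)).mono'
      hm.aestronglyMeasurable (ae_of_all _ fun ω => ?_)
    exact Finset.single_le_sum (f := fun k => ‖G k‖) (fun k _ => norm_nonneg _)
      (Finset.mem_range.mpr (Nat.lt_succ_of_le (hEd ω)))
  have hmI : ∀ I : Finset (Fin d), MeasurableSet (⋂ j ∈ I, A j) :=
    fun I => MeasurableSet.biInter I.countable_toSet fun j _ => hA j
  have hcount : ∀ (ω : Ω) (i : ℕ),
      (∑ I ∈ Finset.powersetCard i (Finset.univ : Finset (Fin d)),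
        (⋂ j ∈ I, A j).indicator (fun _ => (1 : ℝ)) ω) = ((E ω).choose i : ℝ) := by
    intro ω i
    rw [hE, ← count_lemma (Finset.univ.filter fun i => ω ∈ A i) i]
    refine Finset.sum_congr rfl fun I _ => ?_
    have hiff : (ω ∈ ⋂ j ∈ I, A j) ↔ I ⊆ Finset.univ.filter fun i => ω ∈ A i := by
      simp [Set.mem_iInter, Finset.subset_iff]
    simp only [Set.indicator_apply, hiff]
  -- deterministic part as integral
  have hdet : (∑ i ∈ Finset.Icc 1 n, (-1 : ℝ) ^ (i - 1) *
        ∑ I ∈ Finset.powersetCard i (Finset.univ : Finset (Fin d)),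
          (P (⋂ j ∈ I, A j)).toReal)
      = ∫ ω, (∑ i ∈ Finset.Icc 1 n, (-1 : ℝ) ^ (i - 1) * ((E ω).choose i : ℝ)) ∂P := by
    rw [integral_finset_sum _
      (fun i _ => hint (fun m => (-1 : ℝ) ^ (i - 1) * (m.choose i : ℝ)))]
    refine Finset.sum_congr rfl fun i _ => ?_
    rw [integral_const_mul]
    congr 1
    have h1 : ∀ I : Finset (Fin d), (P (⋂ j ∈ I, A j)).toReal
        = ∫ ω, (⋂ j ∈ I, A j).indicator (fun _ => (1 : ℝ)) ω ∂P :=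
      fun I => (integral_indicator_one (hmI I)).symm
    simp_rw [h1]
    rw [← integral_finset_sum _
      (fun I _ => (integrable_const (1 : ℝ)).indicator (hmI I))]
    exact integral_congr_ae (ae_of_all _ fun ω => hcount ω i)
  rw [hdet, ← integral_add
    (hint (fun m => ∑ i ∈ Finset.Icc 1 n, (-1 : ℝ) ^ (i - 1) * (m.choose i : ℝ)))
    (hint (fun m => (∑ i ∈ Finset.range (n + 1), (-1 : ℝ) ^ i * (m.choose i : ℝ))
      * (if n + 1 ≤ m then 1 else 0)))]
  have hunion : ∀ ω, (1 ≤ E ω) ↔ ω ∈ ⋃ i, A i := by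
    intro ω
    rw [hE]
    simp [Set.mem_iUnion, Nat.one_le_iff_ne_zero, Finset.card_ne_zero,
      Finset.filter_nonempty_iff, Finset.filter_eq_empty_iff]
  have heq : ∫ ω, ((∑ i ∈ Finset.Icc 1 n, (-1 : ℝ) ^ (i - 1) * ((E ω).choose i : ℝ))
        + (∑ i ∈ Finset.range (n + 1), (-1 : ℝ) ^ i * ((E ω).choose i : ℝ))
          * (if n + 1 ≤ E ω then 1 else 0)) ∂P
      = ∫ ω, (⋃ i, A i).indicator (fun _ => (1 : ℝ)) ω ∂P := by
    refine integral_congr_ae (ae_of_all _ fun ω => ?_)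
    dsimp only
    rw [key_pointwise n (E ω) hn1, Set.indicator_apply]
    by_cases h : ω ∈ ⋃ i, A i
    · rw [if_pos h, if_pos ((hunion ω).mpr h)]
    · rw [if_neg h, if_neg (fun hc => h ((hunion ω).mp hc))]
  rw [heq]
  exact integral_indicator_one (MeasurableSet.iUnion fun i => hA i)
end

section
/- Likelihood-ratio identity for the first-order mixture importance-sampling measure: let p_i = P(A_i)/ᾱ with ᾱ = ∑_j P(A_j) > 0 and Q(·) = ∑_i p_i P(· | A_i). Then Q is a probability measure, Q is absolutely continuous with respect to P, Q(E ≥ 1) = 1, and the Radon–Nikodym derivative satisfies dQ/dP = E/ᾱ P-a.e. on {E ≥ 1} (and Q-a.e.); consequently ᾱ + (1-E)1{E≥2} · (ᾱ/E) = ᾱ/E holds Q-a.s., and E_Q[ᾱ/E] = P(⋃_i A_i). -/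
open Finset Classical MeasureTheory ProbabilityTheory

lemma withDensity_finset_sum' {Ω : Type*} [MeasurableSpace Ω] (μ : Measure Ω)
    {ι : Type*} (s : Finset ι) (f : ι → Ω → ENNReal) (hf : ∀ i, Measurable (f i)) :
    μ.withDensity (fun ω => ∑ i ∈ s, f i ω) = ∑ i ∈ s, μ.withDensity (f i) := by
  classical
  induction s using Finset.induction with
  | empty => simp
  | insert a s h ih =>
    simp only [Finset.sum_insert h]
    rw [show (fun ω => f a ω + ∑ i ∈ s, f i ω)
        = f a + (fun ω => ∑ i ∈ s, f i ω) from rfl,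
      withDensity_add_left (hf a), ih]

/-- Likelihood-ratio identity for the first-order mixture importance-sampling
measure `Q = ∑ i, (P(A i)/ᾱ) • P(·|A i)` with `ᾱ = ∑ i, P(A i)`: `Q` is a
probability measure absolutely continuous w.r.t. `P`, `Q(E ≥ 1) = 1`,
`dQ/dP = E/ᾱ` (P-a.e. on `{E ≥ 1}`), the simplification
`ᾱ + (1-E)1{E≥2}·(ᾱ/E) = ᾱ/E` holds Q-a.s., and `E_Q[ᾱ/E] = P(⋃ i, A i)`. -/
theorem stmt15 {Ω : Type*} [MeasurableSpace Ω] (P : Measure Ω)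
    [IsProbabilityMeasure P] (d : ℕ) (hd : 0 < d) (A : Fin d → Set Ω)
    (hA : ∀ i, MeasurableSet (A i)) (hpos : ∀ i, 0 < P (A i))
    (E : Ω → ℕ)
    (hE : ∀ ω, E ω = (Finset.univ.filter fun i => ω ∈ A i).card)
    (alphaBar : ENNReal) (halpha : alphaBar = ∑ i : Fin d, P (A i))
    (Q : Measure Ω)
    (hQ : Q = ∑ i : Fin d,
      (P (A i) / alphaBar) • ProbabilityTheory.cond P (A i)) :
    IsProbabilityMeasure Q ∧
    Q ≪ P ∧
    Q {ω | 1 ≤ E ω} = 1 ∧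
    (∀ᵐ ω ∂P, 1 ≤ E ω → Q.rnDeriv P ω = (E ω : ENNReal) / alphaBar) ∧
    (∀ᵐ ω ∂Q,
      alphaBar.toReal
          + (1 - (E ω : ℝ)) * (if 2 ≤ E ω then 1 else 0)
            * (alphaBar.toReal / (E ω : ℝ))
        = alphaBar.toReal / (E ω : ℝ)) ∧
    ∫ ω, alphaBar.toReal / (E ω : ℝ) ∂Q = (P (⋃ i, A i)).toReal := by
  classical
  -- basic facts about alphaBar
  have hα0 : alphaBar ≠ 0 := by
    rw [halpha]
    intro h
    have := (hpos ⟨0, hd⟩).ne'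
    exact this (le_antisymm (h ▸ Finset.single_le_sum (f := fun i => P (A i))
      (fun i _ => zero_le) (Finset.mem_univ _)) zero_le)
  have hαtop : alphaBar ≠ ⊤ := by
    rw [halpha]
    exact (lt_of_le_of_lt (Finset.sum_le_sum fun i _ => prob_le_one)
      (by simp : (∑ _i : Fin d, (1:ENNReal)) < ⊤)).ne
  -- E as ENNReal-valued sum of indicators
  have hEsum : ∀ ω, (E ω : ENNReal) = ∑ i : Fin d, (A i).indicator (1 : Ω → ENNReal) ω := by
    intro ω
    rw [hE ω, Finset.card_filter, Nat.cast_sum]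
    refine Finset.sum_congr rfl fun i _ => ?_
    by_cases h : ω ∈ A i <;> simp [Set.indicator_apply, h]
  have hEmeas : Measurable fun ω => (E ω : ENNReal) := by
    simp only [hEsum]
    exact Finset.measurable_sum _ fun i _ =>
      (measurable_const.indicator (hA i))
  have hENat : Measurable E := by
    have : E = fun ω => ∑ i : Fin d, if ω ∈ A i then 1 else 0 := by
      funext ω; rw [hE ω, Finset.card_filter]
    rw [this]
    exact Finset.measurable_sum _ fun i _ =>
      Measurable.ite (hA i) measurable_const measurable_const
  -- density
  set f : Ω → ENNReal := fun ω => (E ω : ENNReal) / alphaBar with hf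
  have hfmeas : Measurable f := hEmeas.div measurable_const
  -- Q = P.withDensity f
  have hQwd : Q = P.withDensity f := by
    have h1 : ∀ i : Fin d, (P (A i) / alphaBar) • ProbabilityTheory.cond P (A i)
        = alphaBar⁻¹ • P.restrict (A i) := by
      intro i
      rw [ProbabilityTheory.cond, smul_smul]
      congr 1
      rw [div_eq_mul_inv, mul_comm (P (A i)), mul_assoc,
        ENNReal.mul_inv_cancel (hpos i).ne' (measure_ne_top P _), mul_one]
    rw [hQ]
    simp only [h1]
    rw [← Finset.smul_sum]
    have h2 : ∀ i : Fin d, P.restrict (A i)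
        = P.withDensity ((A i).indicator (1 : Ω → ENNReal)) :=
      fun i => (withDensity_indicator_one (hA i)).symm
    simp only [h2]
    rw [← withDensity_finset_sum' P Finset.univ
      (fun i => (A i).indicator (1 : Ω → ENNReal))
      (fun i => measurable_const.indicator (hA i))]
    rw [← withDensity_smul (f := fun ω => ∑ i : Fin d, (A i).indicator (1 : Ω → ENNReal) ω)
      alphaBar⁻¹ (Finset.measurable_sum _ fun i _ =>
        (measurable_const.indicator (hA i) : Measurable ((A i).indicator (1 : Ω → ENNReal))))]
    congr 1
    funext ω
    simp only [hf, Pi.smul_apply, smul_eq_mul, ← hEsum ω, div_eq_mul_inv, mul_comm]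
  -- Q is a probability measure
  have hQuniv : Q Set.univ = 1 := by
    rw [hQ]
    simp only [Measure.coe_finset_sum, Finset.sum_apply, Measure.smul_apply, smul_eq_mul]
    have : ∀ i : Fin d, (ProbabilityTheory.cond P (A i)) Set.univ = 1 := by
      intro i
      have : IsProbabilityMeasure (ProbabilityTheory.cond P (A i)) :=
        cond_isProbabilityMeasure (hpos i).ne'
      exact measure_univ
    simp only [this, mul_one]
    simp only [div_eq_mul_inv]
    rw [← Finset.sum_mul, ← halpha, ENNReal.mul_inv_cancel hα0 hαtop]
  have hQprob : IsProbabilityMeasure Q := ⟨hQuniv⟩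
  -- Q {E ≥ 1} = 1
  have hS : MeasurableSet {ω | 1 ≤ E ω} := hENat measurableSet_Ici
  have hQS : Q {ω | 1 ≤ E ω} = 1 := by
    have hind : ∀ ω, f ω = Set.indicator {ω | 1 ≤ E ω} f ω := by
      intro ω
      by_cases h : 1 ≤ E ω
      · exact (Set.indicator_of_mem (show ω ∈ {ω | 1 ≤ E ω} from h) f).symm
      · have hE0 : E ω = 0 := by omega
        rw [Set.indicator_of_notMem (show ω ∉ {ω | 1 ≤ E ω} from h)]
        simp [hf, hE0]
    calc Q {ω | 1 ≤ E ω} = ∫⁻ ω in {ω | 1 ≤ E ω}, f ω ∂P := by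
          rw [hQwd, withDensity_apply f hS]
      _ = ∫⁻ ω, Set.indicator {ω | 1 ≤ E ω} f ω ∂P := (lintegral_indicator hS f).symm
      _ = ∫⁻ ω, f ω ∂P := lintegral_congr fun ω => (hind ω).symm
      _ = Q Set.univ := by rw [hQwd]; rw [withDensity_apply f MeasurableSet.univ,
            Measure.restrict_univ]
      _ = 1 := hQuniv
  have hQae : ∀ᵐ ω ∂Q, 1 ≤ E ω := by
    rw [ae_iff]
    have : {ω | ¬ 1 ≤ E ω} = {ω | 1 ≤ E ω}ᶜ := rfl
    rw [this, measure_compl hS (measure_ne_top Q _), hQuniv, hQS, tsub_self]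
  refine ⟨hQprob, ?_, hQS, ?_, ?_, ?_⟩
  · rw [hQwd]; exact withDensity_absolutelyContinuous P f
  · -- rnDeriv
    rw [hQwd]
    filter_upwards [Measure.rnDeriv_withDensity P hfmeas] with ω hω _
    exact hω
  · -- Q-a.s. identity
    filter_upwards [hQae] with ω hω
    by_cases h2 : 2 ≤ E ω
    · have hn : (E ω : ℝ) ≠ 0 := by positivity
      simp only [if_pos h2, mul_one]
      field_simp
      ring
    · have h1 : E ω = 1 := by omega
      simp [h1]
  · -- integral identity
    have hgR : Measurable fun ω => (E ω : ℝ) :=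
      measurable_from_top.comp hENat
    have hg : Measurable fun ω => alphaBar.toReal / (E ω : ℝ) :=
      measurable_const.div hgR
    have hg0 : 0 ≤ᵐ[Q] fun ω => alphaBar.toReal / (E ω : ℝ) :=
      Filter.Eventually.of_forall fun ω => div_nonneg ENNReal.toReal_nonneg (Nat.cast_nonneg _)
    rw [integral_eq_lintegral_of_nonneg_ae hg0 hg.aestronglyMeasurable]
    congr 1
    have hofg : Measurable fun ω => ENNReal.ofReal (alphaBar.toReal / (E ω : ℝ)) :=
      ENNReal.measurable_ofReal.comp hg
    rw [hQwd, lintegral_withDensity_eq_lintegral_mul P hfmeas hofg]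
    have hpoint : ∀ ω, (f * fun ω => ENNReal.ofReal (alphaBar.toReal / (E ω : ℝ))) ω
        = Set.indicator (⋃ i, A i) (1 : Ω → ENNReal) ω := by
      intro ω
      by_cases hmem : ω ∈ ⋃ i, A i
      · rw [Set.indicator_of_mem hmem]
        obtain ⟨i, hi⟩ := Set.mem_iUnion.mp hmem
        have hE1 : 1 ≤ E ω := by
          rw [hE ω]
          exact Finset.card_pos.mpr ⟨i, Finset.mem_filter.mpr ⟨Finset.mem_univ i, hi⟩⟩
        have hEne : (E ω : ENNReal) ≠ 0 := by
          simp only [ne_eq, Nat.cast_eq_zero]; omega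
        have hEpos : (0:ℝ) < (E ω : ℝ) := by positivity
        have hcast : ENNReal.ofReal (alphaBar.toReal / (E ω : ℝ))
            = alphaBar / (E ω : ENNReal) := by
          rw [ENNReal.ofReal_div_of_pos hEpos, ENNReal.ofReal_toReal hαtop,
            ENNReal.ofReal_natCast]
        simp only [Pi.mul_apply, hcast, hf]
        rw [div_eq_mul_inv, div_eq_mul_inv]
        have : (E ω : ENNReal) * alphaBar⁻¹ * (alphaBar * ((E ω : ENNReal))⁻¹)
            = ((E ω : ENNReal) * ((E ω : ENNReal))⁻¹) * (alphaBar⁻¹ * alphaBar) := by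
          ring
        rw [this, ENNReal.mul_inv_cancel hEne (ENNReal.natCast_ne_top _),
          ENNReal.inv_mul_cancel hα0 hαtop, mul_one]
        rfl
      · rw [Set.indicator_of_notMem hmem]
        have hE0 : E ω = 0 := by
          rw [hE ω, Finset.card_eq_zero, Finset.filter_eq_empty_iff]
          intro i _
          exact fun hi => hmem (Set.mem_iUnion.mpr ⟨i, hi⟩)
        simp [hf, hE0]
    rw [lintegral_congr hpoint, lintegral_indicator_one (MeasurableSet.iUnion hA)]
end

section
/- Second-order importance sampling unbiasedness: let q = ∑_{i<j} P(A_i ∩ A_j) > 0, p_{ij} = P(A_i ∩ A_j)/q, and Q(·) = ∑_{i<j} p_{ij} P(· | A_i ∩ A_j). Then Q(E ≥ 2) = 1, dQ/dP = binom(E,2)/q on {E ≥ 2}, and E_Q[ᾱ - 2q/E] = P(⋃_i A_i), where ᾱ = ∑_i P(A_i). -/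
open Finset Classical MeasureTheory ProbabilityTheory

open scoped ENNReal NNReal

-- L1: counting ordered pairs
theorem aux_card_pairs {d : ℕ} (S : Finset (Fin d)) :
    ((Finset.univ.filter (fun p : Fin d × Fin d => p.1 < p.2)).filter
      (fun p => p.1 ∈ S ∧ p.2 ∈ S)).card = S.card.choose 2 := by
  classical
  rw [← Finset.card_powersetCard 2 S]
  apply Finset.card_bij' (i := fun p _ => ({p.1, p.2} : Finset (Fin d)))
    (j := fun t ht => (t.min' (Finset.card_pos.mp (by
        rw [(Finset.mem_powersetCard.mp ht).2]; norm_num)),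
      t.max' (Finset.card_pos.mp (by
        rw [(Finset.mem_powersetCard.mp ht).2]; norm_num))))
  case hi =>
    intro p hp
    simp only [Finset.mem_filter, Finset.mem_univ, true_and] at hp
    rw [Finset.mem_powersetCard]
    refine ⟨?_, ?_⟩
    · intro x hx; simp only [Finset.mem_insert, Finset.mem_singleton] at hx
      rcases hx with h | h <;> simp [h, hp.2.1, hp.2.2]
    · rw [Finset.card_insert_of_notMem (by simp [hp.1.ne]), Finset.card_singleton]
  case hj =>
    intro t ht
    have h2 := (Finset.mem_powersetCard.mp ht).2
    have hsub := (Finset.mem_powersetCard.mp ht).1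
    have hne : t.Nonempty := Finset.card_pos.mp (by rw [h2]; norm_num)
    simp only [Finset.mem_filter, Finset.mem_univ, true_and]
    exact ⟨Finset.min'_lt_max'_of_card t (by omega), hsub (t.min'_mem hne),
      hsub (t.max'_mem hne)⟩
  case left_inv =>
    intro p hp
    simp only [Finset.mem_filter, Finset.mem_univ, true_and] at hp
    have hlt := hp.1
    have h1 : ({p.1, p.2} : Finset (Fin d)).min' ⟨p.1, by simp⟩ = p.1 := by
      apply le_antisymm
      · exact Finset.min'_le _ _ (by simp)
      · apply Finset.le_min'; intro y hy
        simp only [Finset.mem_insert, Finset.mem_singleton] at hy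
        rcases hy with h | h <;> simp [h, hlt.le]
    have h2 : ({p.1, p.2} : Finset (Fin d)).max' ⟨p.1, by simp⟩ = p.2 := by
      apply le_antisymm
      · apply Finset.max'_le; intro y hy
        simp only [Finset.mem_insert, Finset.mem_singleton] at hy
        rcases hy with h | h <;> simp [h, hlt.le]
      · exact Finset.le_max' _ _ (by simp)
    simp [h1, h2]
  case right_inv =>
    intro t ht
    have h2 := (Finset.mem_powersetCard.mp ht).2
    have hne : t.Nonempty := Finset.card_pos.mp (by rw [h2]; norm_num)
    apply Finset.eq_of_subset_of_card_le
    · intro x hx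
      simp only [Finset.mem_insert, Finset.mem_singleton] at hx
      rcases hx with h | h <;> [exact h ▸ t.min'_mem hne; exact h ▸ t.max'_mem hne]
    · have hm := t.min'_mem hne
      have hM := t.max'_mem hne
      have hlt := Finset.min'_lt_max'_of_card t (by omega)
      have : ({(t.min' hne), (t.max' hne)} : Finset (Fin d)).card = 2 := by
        rw [Finset.card_insert_of_notMem (by simp [hlt.ne]), Finset.card_singleton]
      exact h2.le.trans this.ge

lemma aux_withDensity_finset_sum {α : Type*} [MeasurableSpace α] (μ : Measure α) {ι : Type*}
    (s : Finset ι) (g : ι → α → ℝ≥0∞) (hg : ∀ i ∈ s, Measurable (g i)) :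
    μ.withDensity (∑ i ∈ s, g i) = ∑ i ∈ s, μ.withDensity (g i) := by
  classical
  induction s using Finset.induction with
  | empty => simp
  | insert _ _ hx ih =>
    rename_i a s'
    rw [Finset.sum_insert hx, Finset.sum_insert hx,
      withDensity_add_left (hg a (Finset.mem_insert_self a s')),
      ih (fun i hi => hg i (Finset.mem_insert_of_mem hi))]


/-- Second-order importance sampling unbiasedness: with
`q = ∑_{i<j} P(A i ∩ A j) > 0` and
`Q = ∑_{i<j} (P(A i ∩ A j)/q) • P(·|A i ∩ A j)`, one has `Q(E ≥ 2) = 1`,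
`dQ/dP = choose(E,2)/q` on `{E ≥ 2}`, and
`E_Q[ᾱ - 2q/E] = P(⋃ i, A i)` where `ᾱ = ∑ i, P(A i)`. -/
theorem stmt16 {Ω : Type*} [MeasurableSpace Ω] (P : Measure Ω)
    [IsProbabilityMeasure P] (d : ℕ) (hd : 2 ≤ d) (A : Fin d → Set Ω)
    (hA : ∀ i, MeasurableSet (A i))
    (hpos : ∀ i j : Fin d, i < j → 0 < P (A i ∩ A j))
    (E : Ω → ℕ)
    (hE : ∀ ω, E ω = (Finset.univ.filter fun i => ω ∈ A i).card)
    (alphaBar q : ENNReal)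
    (halpha : alphaBar = ∑ i : Fin d, P (A i))
    (hq : q = ∑ p ∈ Finset.univ.filter (fun p : Fin d × Fin d => p.1 < p.2),
      P (A p.1 ∩ A p.2))
    (Q : Measure Ω)
    (hQ : Q = ∑ p ∈ Finset.univ.filter (fun p : Fin d × Fin d => p.1 < p.2),
      (P (A p.1 ∩ A p.2) / q) • ProbabilityTheory.cond P (A p.1 ∩ A p.2)) :
    Q {ω | 2 ≤ E ω} = 1 ∧
    (∀ᵐ ω ∂P, 2 ≤ E ω → Q.rnDeriv P ω = ((E ω).choose 2 : ENNReal) / q) ∧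
    ∫ ω, alphaBar.toReal - 2 * q.toReal / (E ω : ℝ) ∂Q
      = (P (⋃ i, A i)).toReal := by
  classical
  set pairs : Finset (Fin d × Fin d) :=
    Finset.univ.filter (fun p : Fin d × Fin d => p.1 < p.2) with hpairs
  have hmeasP : ∀ p : Fin d × Fin d, MeasurableSet (A p.1 ∩ A p.2) :=
    fun p => (hA p.1).inter (hA p.2)
  have hne0 : ∀ p ∈ pairs, P (A p.1 ∩ A p.2) ≠ 0 := by
    intro p hp
    simp only [hpairs, Finset.mem_filter, Finset.mem_univ, true_and] at hp
    exact (hpos p.1 p.2 hp).ne'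
  have hnetop : ∀ p : Fin d × Fin d, P (A p.1 ∩ A p.2) ≠ ⊤ := fun p => measure_ne_top _ _
  have hq0 : q ≠ 0 := by
    rw [hq]
    intro h
    have h01 : ((⟨0, by omega⟩ : Fin d), (⟨1, by omega⟩ : Fin d)) ∈ pairs := by
      rw [hpairs]
      simp only [Finset.mem_filter, Finset.mem_univ, true_and]
      exact Fin.mk_lt_mk.mpr (by omega)
    exact hne0 _ h01 (Finset.sum_eq_zero_iff.mp h _ h01)
  have hqtop : q ≠ ⊤ := by
    rw [hq]
    exact (ENNReal.sum_lt_top.mpr fun p _ => measure_lt_top P _).ne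
  have hcard : ∀ ω, (pairs.filter (fun p => ω ∈ A p.1 ∩ A p.2)).card = (E ω).choose 2 := by
    intro ω
    rw [hE ω, ← aux_card_pairs (Finset.univ.filter fun i => ω ∈ A i)]
    apply congrArg
    apply Finset.filter_congr
    intro p hp
    simp [Set.mem_inter_iff]
  have hEmeas : Measurable E := by
    have hEe : E = fun ω => ∑ i : Fin d, if ω ∈ A i then 1 else 0 := by
      funext ω; rw [hE ω, Finset.card_filter]
    rw [hEe]
    exact Finset.measurable_sum _ fun i _ =>
      Measurable.ite (hA i) measurable_const measurable_const
  -- Part 1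
  have hsub : ∀ p ∈ pairs, A p.1 ∩ A p.2 ⊆ {ω | 2 ≤ E ω} := by
    intro p hp ω hω
    simp only [hpairs, Finset.mem_filter, Finset.mem_univ, true_and] at hp
    simp only [Set.mem_setOf_eq, hE ω]
    have hss : ({p.1, p.2} : Finset (Fin d)) ⊆ Finset.univ.filter fun i => ω ∈ A i := by
      intro x hx
      simp only [Finset.mem_insert, Finset.mem_singleton] at hx
      rcases hx with h | h <;> subst h <;> simp [hω.1, hω.2]
    calc 2 = ({p.1, p.2} : Finset (Fin d)).card := by
            rw [Finset.card_insert_of_notMem (by simp [hp.ne]), Finset.card_singleton]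
      _ ≤ _ := Finset.card_le_card hss
  have part1 : Q {ω | 2 ≤ E ω} = 1 := by
    rw [hQ, Measure.finset_sum_apply]
    have hterm : ∀ p ∈ pairs,
        ((P (A p.1 ∩ A p.2) / q) • ProbabilityTheory.cond P (A p.1 ∩ A p.2)) {ω | 2 ≤ E ω}
          = P (A p.1 ∩ A p.2) / q := by
      intro p hp
      rw [Measure.smul_apply, smul_eq_mul, cond_apply (hmeasP p),
        Set.inter_eq_left.mpr (hsub p hp), ENNReal.inv_mul_cancel (hne0 p hp) (hnetop p),
        mul_one]
    rw [Finset.sum_congr rfl hterm]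
    simp only [div_eq_mul_inv, ← Finset.sum_mul]
    rw [← hq]
    exact ENNReal.mul_inv_cancel hq0 hqtop
  -- withDensity representation
  have hfmeas : Measurable (fun ω => ((E ω).choose 2 : ℝ≥0∞) / q) :=
    (measurable_from_top (f := fun n : ℕ => ((n.choose 2 : ℝ≥0∞) / q))).comp hEmeas
  have hQw : Q = P.withDensity (fun ω => ((E ω).choose 2 : ℝ≥0∞) / q) := by
    have hval : ∀ p ∈ pairs, P (A p.1 ∩ A p.2) / q * (P (A p.1 ∩ A p.2))⁻¹ = q⁻¹ := by
      intro p hp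
      rw [div_eq_mul_inv, mul_right_comm, ENNReal.mul_inv_cancel (hne0 p hp) (hnetop p),
        one_mul]
    have hcomp : ∀ p ∈ pairs,
        (P (A p.1 ∩ A p.2) / q) • ProbabilityTheory.cond P (A p.1 ∩ A p.2)
          = P.withDensity (q⁻¹ • (A p.1 ∩ A p.2).indicator 1) := by
      intro p hp
      rw [withDensity_smul _ (measurable_one.indicator (hmeasP p)),
        withDensity_indicator_one (hmeasP p), ← hval p hp]
      exact smul_smul _ _ _
    rw [hQ, Finset.sum_congr rfl hcomp,
      ← aux_withDensity_finset_sum P pairs _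
        (fun p _ => (measurable_one.indicator (hmeasP p)).const_smul _)]
    apply congrArg
    funext ω
    simp only [Finset.sum_apply, Pi.smul_apply, smul_eq_mul, Set.indicator_apply,
      Pi.one_apply, mul_ite, mul_one, mul_zero]
    rw [← Finset.sum_filter, Finset.sum_const, hcard ω, nsmul_eq_mul, div_eq_mul_inv]
  -- Part 2
  have part2 : ∀ᵐ ω ∂P, 2 ≤ E ω → Q.rnDeriv P ω = ((E ω).choose 2 : ENNReal) / q := by
    have h := Measure.rnDeriv_withDensity P hfmeas
    rw [← hQw] at h
    filter_upwards [h] with ω hω _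
    exact hω
  refine ⟨part1, part2, ?_⟩
  -- Part 3
  have hqr : q.toReal ≠ 0 := ENNReal.toReal_ne_zero.mpr ⟨hq0, hqtop⟩
  have halphatop : alphaBar ≠ ⊤ := by
    rw [halpha]
    exact (ENNReal.sum_lt_top.mpr fun i _ => measure_lt_top P _).ne
  have hqnn : q.toNNReal ≠ 0 := by
    simp [ENNReal.toNNReal_eq_zero_iff, hq0, hqtop]
  have hfrmeas : Measurable (fun ω => (((E ω).choose 2 : ℝ≥0) / q.toNNReal)) :=
    (measurable_from_top (f := fun n : ℕ => ((n.choose 2 : ℝ≥0) / q.toNNReal))).comp hEmeas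
  have hcoe : (fun ω => ((((E ω).choose 2 : ℝ≥0) / q.toNNReal : ℝ≥0) : ℝ≥0∞))
      = fun ω => ((E ω).choose 2 : ℝ≥0∞) / q := by
    funext ω
    rw [ENNReal.coe_div hqnn, ENNReal.coe_natCast, ENNReal.coe_toNNReal hqtop]
  rw [hQw, ← hcoe, integral_withDensity_eq_integral_smul hfrmeas]
  have hpt : ∀ ω, (((E ω).choose 2 : ℝ≥0) / q.toNNReal) •
        (alphaBar.toReal - 2 * q.toReal / (E ω : ℝ)) =
      (∑ p ∈ pairs, (A p.1 ∩ A p.2).indicator (fun _ => alphaBar.toReal / q.toReal) ω)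
        - (∑ i : Fin d, (A i).indicator (fun _ => (1:ℝ)) ω)
        + (⋃ i, A i).indicator (fun _ => (1:ℝ)) ω := by
    intro ω
    have h1 : ∑ p ∈ pairs, (A p.1 ∩ A p.2).indicator (fun _ => alphaBar.toReal / q.toReal) ω
        = ((E ω).choose 2 : ℝ) * (alphaBar.toReal / q.toReal) := by
      simp only [Set.indicator_apply]
      rw [← Finset.sum_filter, Finset.sum_const, hcard ω, nsmul_eq_mul]
    have h2 : ∑ i : Fin d, (A i).indicator (fun _ => (1:ℝ)) ω = (E ω : ℝ) := by
      simp only [Set.indicator_apply]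
      rw [← Finset.sum_filter, Finset.sum_const, ← hE ω, nsmul_eq_mul, mul_one]
    have hfr : ((((E ω).choose 2 : ℝ≥0) / q.toNNReal : ℝ≥0) : ℝ)
        = ((E ω).choose 2 : ℝ) / q.toReal := by
      rw [NNReal.coe_div, NNReal.coe_natCast]
      rfl
    rw [NNReal.smul_def, hfr, h1, h2]
    by_cases hu : ω ∈ ⋃ i, A i
    · have hE1 : 1 ≤ E ω := by
        obtain ⟨i, hi⟩ := Set.mem_iUnion.mp hu
        rw [hE ω]
        exact Finset.card_pos.mpr ⟨i, by simp [hi]⟩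
      rw [Set.indicator_of_mem hu]
      have hEne : (E ω : ℝ) ≠ 0 := Nat.cast_ne_zero.mpr (by omega)
      rw [Nat.cast_choose_two]
      field_simp
      linear_combination
        (((E ω : ℝ) ^ 2 * alphaBar.toReal - (E ω : ℝ) * alphaBar.toReal + 2 * q.toReal
          - 2 * q.toReal * (E ω : ℝ)) * q.toReal * q.toReal⁻¹) * mul_inv_cancel₀ hEne
        + ((E ω : ℝ) ^ 2 * alphaBar.toReal - (E ω : ℝ) * alphaBar.toReal + 2 * q.toReal
          - 2 * q.toReal * (E ω : ℝ)) * mul_inv_cancel₀ hqr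
    · have hE0 : E ω = 0 := by
        rw [hE ω, Finset.card_eq_zero, Finset.filter_eq_empty_iff]
        intro i _
        exact fun hi => hu (Set.mem_iUnion.mpr ⟨i, hi⟩)
      rw [Set.indicator_of_notMem hu, hE0]
      simp
  rw [integral_congr_ae (Filter.Eventually.of_forall hpt)]
  have hint1 : Integrable
      (fun ω => ∑ p ∈ pairs, (A p.1 ∩ A p.2).indicator
        (fun _ => alphaBar.toReal / q.toReal) ω) P :=
    integrable_finset_sum _ fun p _ => (integrable_const _).indicator (hmeasP p)
  have hint2 : Integrable (fun ω => ∑ i : Fin d, (A i).indicator (fun _ => (1:ℝ)) ω) P :=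
    integrable_finset_sum _ fun i _ => (integrable_const _).indicator (hA i)
  have hint3 : Integrable ((⋃ i, A i).indicator fun _ => (1:ℝ)) P :=
    (integrable_const _).indicator (MeasurableSet.iUnion fun i => hA i)
  have hint12 : Integrable (fun ω =>
      (∑ p ∈ pairs, (A p.1 ∩ A p.2).indicator (fun _ => alphaBar.toReal / q.toReal) ω)
      - (∑ i : Fin d, (A i).indicator (fun _ => (1:ℝ)) ω)) P := hint1.sub hint2
  rw [integral_add hint12 hint3, integral_sub hint1 hint2,
    integral_finset_sum _ (fun p _ => (integrable_const _).indicator (hmeasP p)),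
    integral_finset_sum _ (fun i _ => (integrable_const _).indicator (hA i)),
    integral_indicator_const _ (MeasurableSet.iUnion fun i => hA i)]
  have e1 : ∀ p ∈ pairs, ∫ ω, (A p.1 ∩ A p.2).indicator
      (fun _ => alphaBar.toReal / q.toReal) ω ∂P
      = (P (A p.1 ∩ A p.2)).toReal * (alphaBar.toReal / q.toReal) := by
    intro p _
    rw [integral_indicator_const _ (hmeasP p), smul_eq_mul]
    rfl
  have e2 : ∀ i : Fin d, i ∈ Finset.univ → ∫ ω, (A i).indicator (fun _ => (1:ℝ)) ω ∂P
      = (P (A i)).toReal := by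
    intro i _
    rw [integral_indicator_const _ (hA i), smul_eq_mul, mul_one]
    rfl
  rw [Finset.sum_congr rfl e1, Finset.sum_congr rfl e2, ← Finset.sum_mul]
  have hsq : ∑ p ∈ pairs, (P (A p.1 ∩ A p.2)).toReal = q.toReal := by
    rw [← ENNReal.toReal_sum (fun p _ => hnetop p), ← hq]
  have hsa : ∑ i : Fin d, (P (A i)).toReal = alphaBar.toReal := by
    rw [← ENNReal.toReal_sum (fun i _ => measure_ne_top P _), ← halpha]
  rw [hsq, hsa, smul_eq_mul, mul_one, mul_div_cancel₀ _ hqr]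
  simp only [Measure.real]
  ring
end
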